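/- Let Â ⊆ L^p_d be an acceptance set and A = cl_M(Â + K_I^M𝟙). Then for every X ∈ L^p_d and every v ∈ K_I^+ the scalarizations coincide: φ_{R_A, v}(X) = φ_{R_Â, v}(X), where φ_{R, v}(X) = inf{vᵀu : u ∈ R(X)} (with inf ∅ = +∞). -/

import Mathlib

open MeasureTheory Set Filter Topology Pointwise ENNReal

noncomputable section

/-- `ℝ^d` -/
abbrev Vec (d : ℕ) := Fin d → ℝ

/-- the Euclidean dot (bilinear) pairing `vᵀu` on `ℝ^d` -/
def dotp {d : ℕ} (v u : Vec d) : ℝ := ∑ i, v i * u i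

/-- the nonnegative orthant `ℝ^d_+` -/
def posOrthant (d : ℕ) : Set (Vec d) := {x | ∀ i, 0 ≤ x i}

/-- the (positive) dual cone of a set `C ⊆ ℝ^d` -/
def posDual {d : ℕ} (C : Set (Vec d)) : Set (Vec d) := {v | ∀ x ∈ C, 0 ≤ dotp v x}

/-- the orthogonal complement `M^⊥` of a subspace -/
def perpSet {d : ℕ} (M : Submodule ℝ (Vec d)) : Set (Vec d) := {v | ∀ u ∈ M, dotp v u = 0}

/-- the half space `G(w) = {x : wᵀx ≥ 0}` -/
def Gset {d : ℕ} (w : Vec d) : Set (Vec d) := {x | 0 ≤ dotp w x}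

/-- a closed convex cone `K` with `ℝ^d_+ ⊆ K ≠ ℝ^d` (a solvency cone) -/
def IsSolvencyCone {d : ℕ} (K : Set (Vec d)) : Prop :=
  IsClosed K ∧ Convex ℝ K ∧ (∀ t : ℝ, 0 < t → ∀ x ∈ K, t • x ∈ K) ∧
    posOrthant d ⊆ K ∧ K ≠ univ

variable {Ω : Type*} [MeasurableSpace Ω]

/-- the constant (deterministic) random vector `u𝟙 ∈ L^p_d` -/
def constLp (μ : Measure Ω) [IsFiniteMeasure μ] (d : ℕ) (p : ℝ≥0∞) (u : Vec d) :
    Lp (Vec d) p μ := MeasureTheory.Lp.const p μ u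

/-- the cone `(L^p_d)_+` of a.s. componentwise nonnegative elements of `L^p_d` -/
def LpNonneg (μ : Measure Ω) [IsFiniteMeasure μ] (d : ℕ) (p : ℝ≥0∞) :
    Set (Lp (Vec d) p μ) := {X | ∀ᵐ ω ∂μ, ∀ i, 0 ≤ X ω i}

/-- an acceptance set in `L^p_d` -/
def IsAcceptanceSet {μ : Measure Ω} [IsFiniteMeasure μ] {d : ℕ} {p : ℝ≥0∞}
    (A : Set (Lp (Vec d) p μ)) : Prop :=
  (∃ x : Vec d, constLp μ d p x ∈ A) ∧ (∃ x : Vec d, constLp μ d p x ∉ A) ∧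
    ∀ X ∈ A, ∀ Y ∈ LpNonneg μ d p, X + Y ∈ A

/-- the function `R_A` induced by a set `A ⊆ L^p_d` -/
def RA {μ : Measure Ω} [IsFiniteMeasure μ] {d : ℕ} {p : ℝ≥0∞} (M : Submodule ℝ (Vec d))
    (A : Set (Lp (Vec d) p μ)) (X : Lp (Vec d) p μ) : Set (Vec d) :=
  {u | u ∈ M ∧ X + constLp μ d p u ∈ A}

/-- the acceptance set `A_R` induced by a function `R` -/
def AR {μ : Measure Ω} {d : ℕ} {p : ℝ≥0∞} (R : Lp (Vec d) p μ → Set (Vec d)) :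
    Set (Lp (Vec d) p μ) := {X | 0 ∈ R X}

/-- `R` is translative in `M`: `R(X + u𝟙) = R(X) − u` for `u ∈ M` -/
def MTranslative {μ : Measure Ω} [IsFiniteMeasure μ] {d : ℕ} {p : ℝ≥0∞}
    (M : Submodule ℝ (Vec d)) (R : Lp (Vec d) p μ → Set (Vec d)) : Prop :=
  ∀ X : Lp (Vec d) p μ, ∀ u ∈ M, R (X + constLp μ d p u) = (fun w => w - u) '' R X

/-- `R` is `B`-monotone: `X² − X¹ ∈ B ⟹ R(X²) ⊇ R(X¹)` -/
def BMonotone {μ : Measure Ω} {d : ℕ} {p : ℝ≥0∞} (B : Set (Lp (Vec d) p μ))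
    (R : Lp (Vec d) p μ → Set (Vec d)) : Prop :=
  ∀ X₁ X₂ : Lp (Vec d) p μ, X₂ - X₁ ∈ B → R X₁ ⊆ R X₂

/-- a (set-valued) risk measure: an `M`-translative, `(L^p_d)_+`-monotone function
mapping into the power set of `M` -/
def IsRiskMeasure {μ : Measure Ω} [IsFiniteMeasure μ] {d : ℕ} {p : ℝ≥0∞}
    (M : Submodule ℝ (Vec d)) (R : Lp (Vec d) p μ → Set (Vec d)) : Prop :=
  (∀ X, R X ⊆ (M : Set (Vec d))) ∧ MTranslative M R ∧ BMonotone (LpNonneg μ d p) R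

/-- `R` is finite at zero -/
def FiniteAtZero {μ : Measure Ω} {d : ℕ} {p : ℝ≥0∞} (M : Submodule ℝ (Vec d))
    (R : Lp (Vec d) p μ → Set (Vec d)) : Prop :=
  R 0 ≠ ∅ ∧ R 0 ≠ (M : Set (Vec d))

/-- measurability of a set-valued map -/
def MeasurableSetValued {d : ℕ} (K : Ω → Set (Vec d)) : Prop :=
  ∀ B : Set (Vec d), IsOpen B → MeasurableSet {ω | (K ω ∩ B).Nonempty}

/-- `L^p_d(K) = {X ∈ L^p_d : X(ω) ∈ K(ω)` a.s.`}` -/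
def LpSection (μ : Measure Ω) [IsFiniteMeasure μ] (d : ℕ) (p : ℝ≥0∞)
    (K : Ω → Set (Vec d)) : Set (Lp (Vec d) p μ) := {X | ∀ᵐ ω ∂μ, X ω ∈ K ω}


/-- the directional closure `cl_M A` of `A ⊆ L^p_d` in `M` -/
def clM {μ : Measure Ω} [IsFiniteMeasure μ] {d : ℕ} {p : ℝ≥0∞}
    (M : Submodule ℝ (Vec d)) (A : Set (Lp (Vec d) p μ)) : Set (Lp (Vec d) p μ) :=
  {X | ∃ u : ℕ → Vec d, (∀ k, u k ∈ M) ∧ Tendsto u atTop (nhds 0) ∧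
    ∀ k, X + constLp μ d p (u k) ∈ A}

/-- `A` is directionally closed in `M` -/
def DirClosed {μ : Measure Ω} [IsFiniteMeasure μ] {d : ℕ} {p : ℝ≥0∞}
    (M : Submodule ℝ (Vec d)) (A : Set (Lp (Vec d) p μ)) : Prop :=
  ∀ (X : Lp (Vec d) p μ) (u : ℕ → Vec d), (∀ k, u k ∈ M) →
    Tendsto u atTop (nhds 0) → (∀ k, X + constLp μ d p (u k) ∈ A) → X ∈ A

/-- the scalarization `φ_{R,v}(X) = inf {vᵀu : u ∈ R(X)}` (in `ℝ ∪ {±∞}`, with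
`inf ∅ = +∞`) -/
def scalarization {μ : Measure Ω} {d : ℕ} {p : ℝ≥0∞} (v : Vec d)
    (R : Lp (Vec d) p μ → Set (Vec d)) (X : Lp (Vec d) p μ) : EReal :=
  sInf ((fun u => ((dotp v u : ℝ) : EReal)) '' R X)

/-!
Enlarging `Â` to `Â + K_I^M𝟙` does not lower the scalarization: if `X + u𝟙 = Y + k𝟙` with `Y ∈ Â`
and `k ∈ K_I^M`, then `u - k ∈ R_Â(X)` and `vᵀ(u - k) ≤ vᵀu` because `v ∈ K_I^+`. Passing to the
directional closure does not lower it either: if `X + (u + wₙ)𝟙` is acceptable with `wₙ → 0`, then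
`vᵀ(u + wₙ) → vᵀu`. Both enlargements contain the original set, which gives the reverse inequality.
-/

open Matrix

lemma dotp_eq_dotProduct {d : ℕ} (v u : Vec d) : dotp v u = v ⬝ᵥ u := rfl

lemma scalarization_anti {μ : Measure Ω} {d : ℕ} {p : ℝ≥0∞} {v : Vec d}
    {R R' : Lp (Vec d) p μ → Set (Vec d)}
    {X : Lp (Vec d) p μ} (h : R X ⊆ R' X) : scalarization v R' X ≤ scalarization v R X :=
  sInf_le_sInf (image_mono h)

lemma scalarization_le_dotp {μ : Measure Ω} {d : ℕ} {p : ℝ≥0∞} {v : Vec d}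
    {R : Lp (Vec d) p μ → Set (Vec d)}
    {X : Lp (Vec d) p μ} {u : Vec d} (hu : u ∈ R X) :
    scalarization v R X ≤ (dotp v u : EReal) :=
  sInf_le ⟨u, hu, rfl⟩

section

variable {μ : Measure Ω} [IsFiniteMeasure μ] {d : ℕ} {p : ℝ≥0∞}

@[simp]
lemma constLp_zero : constLp μ d p 0 = 0 := map_zero (Lp.const p μ)

lemma constLp_add (a b : Vec d) :
    constLp μ d p (a + b) = constLp μ d p a + constLp μ d p b :=
  map_add (Lp.const p μ) a b

lemma constLp_sub (a b : Vec d) :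
    constLp μ d p (a - b) = constLp μ d p a - constLp μ d p b :=
  map_sub (Lp.const p μ) a b

lemma RA_mono {M : Submodule ℝ (Vec d)} {A B : Set (Lp (Vec d) p μ)} (h : A ⊆ B)
    (X : Lp (Vec d) p μ) : RA M A X ⊆ RA M B X :=
  fun _ ⟨huM, huA⟩ => ⟨huM, h huA⟩

lemma subset_clM (M : Submodule ℝ (Vec d)) (A : Set (Lp (Vec d) p μ)) : A ⊆ clM M A :=
  fun X hX => ⟨fun _ => 0, fun _ => M.zero_mem, tendsto_const_nhds, fun _ => by simpa using hX⟩

lemma scalarization_RA_clM (M : Submodule ℝ (Vec d)) (A : Set (Lp (Vec d) p μ)) (v : Vec d)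
    (X : Lp (Vec d) p μ) :
    scalarization v (RA M (clM M A)) X = scalarization v (RA M A) X := by
  refine le_antisymm (scalarization_anti (RA_mono (subset_clM M A) X)) (le_sInf ?_)
  rintro _ ⟨u, ⟨huM, w, hwM, hw0, hwA⟩, rfl⟩
  have hshift : ∀ k, u + w k ∈ RA M A X := fun k =>
    ⟨M.add_mem huM (hwM k), by rw [constLp_add, ← add_assoc]; exact hwA k⟩
  have hlim : Tendsto (fun k => (dotp v (u + w k) : EReal)) atTop (𝓝 (dotp v u : EReal)) := by
    have hcont : Continuous fun x : Vec d => (dotp v (u + x) : EReal) :=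
      EReal.continuous_coe_iff.mpr <|
        continuous_const.dotProduct (continuous_const.add continuous_id)
    have := (hcont.tendsto 0).comp hw0
    rwa [add_zero] at this
  exact ge_of_tendsto hlim (Eventually.of_forall fun k => scalarization_le_dotp (hshift k))

lemma subset_add_constLp_image (A : Set (Lp (Vec d) p μ)) {C : Set (Vec d)}
    (h0 : (0 : Vec d) ∈ C) : A ⊆ A + (fun k => constLp μ d p k) '' C :=
  fun X hX => ⟨X, hX, 0, ⟨0, h0, constLp_zero⟩, add_zero X⟩

lemma scalarization_RA_add_cone (M : Submodule ℝ (Vec d)) (A : Set (Lp (Vec d) p μ))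
    {K : Set (Vec d)} (h0 : (0 : Vec d) ∈ K) {v : Vec d} (hv : v ∈ posDual K)
    (X : Lp (Vec d) p μ) :
    scalarization v (RA M (A + (fun k => constLp μ d p k) '' (K ∩ (M : Set (Vec d))))) X =
      scalarization v (RA M A) X := by
  have hsub := subset_add_constLp_image (μ := μ) (p := p) A (C := K ∩ M) ⟨h0, M.zero_mem⟩
  refine le_antisymm (scalarization_anti (RA_mono hsub X)) (le_sInf ?_)
  rintro _ ⟨u, ⟨huM, Y, hY, _, ⟨k, ⟨hkK, hkM⟩, rfl⟩, hYk⟩, rfl⟩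
  have hshift : u - k ∈ RA M A X := by
    refine ⟨M.sub_mem huM hkM, ?_⟩
    rw [constLp_sub, ← add_sub_assoc, ← hYk, add_sub_cancel_right]
    exact hY
  calc scalarization v (RA M A) X ≤ (dotp v (u - k) : EReal) := scalarization_le_dotp hshift
    _ ≤ dotp v u := by
      rw [EReal.coe_le_coe_iff, dotp_eq_dotProduct, dotp_eq_dotProduct, dotProduct_sub,
        sub_le_self_iff]
      exact hv k hkK

end

theorem scalarization_of_augmented_acceptance_set_general
    (μ : Measure Ω) [IsProbabilityMeasure μ] (d : ℕ) (p : ℝ≥0∞)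
    (M : Submodule ℝ (Vec d)) (KI : Set (Vec d)) (hKI : IsSolvencyCone KI)
    (Ahat : Set (Lp (Vec d) p μ))
    (A : Set (Lp (Vec d) p μ))
    (hA : A = clM M (Ahat + (fun k => constLp μ d p k) '' (KI ∩ (M : Set (Vec d)))))
    (v : Vec d) (hv : v ∈ posDual KI) (X : Lp (Vec d) p μ) :
    scalarization v (RA M A) X = scalarization v (RA M Ahat) X := by
  have h0 : (0 : Vec d) ∈ KI := hKI.2.2.2.1 fun _ => le_rfl
  rw [hA, scalarization_RA_clM, scalarization_RA_add_cone M Ahat h0 hv]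

/-- The scalarizations of `R_Â` and of `R_A`, where
`A = cl_M(Â + K_I^M𝟙)`, coincide for every `v ∈ K_I^+`. -/
theorem scalarization_of_augmented_acceptance_set
    (μ : Measure Ω) [IsProbabilityMeasure μ] (d : ℕ) (hd : 1 ≤ d) (p : ℝ≥0∞)
    (M : Submodule ℝ (Vec d)) (KI : Set (Vec d)) (hKI : IsSolvencyCone KI)
    (Ahat : Set (Lp (Vec d) p μ)) (hAhat : IsAcceptanceSet Ahat)
    (A : Set (Lp (Vec d) p μ))
    (hA : A = clM M (Ahat + (fun k => constLp μ d p k) '' (KI ∩ (M : Set (Vec d)))))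
    (v : Vec d) (hv : v ∈ posDual KI) (X : Lp (Vec d) p μ) :
    scalarization v (RA M A) X = scalarization v (RA M Ahat) X :=
  scalarization_of_augmented_acceptance_set_general μ d p M KI hKI Ahat A hA v hv X
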